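/- arXiv:1205.4155 — 6 statements merged into one kernel-verified Lean document; each statement's English description precedes it below -/
import Mathlib

section
/- Let G be a finite digraph in which every vertex has at least one outgoing edge. For any edge e = (u,v) of G, there exist positive integers S and M such that for all s ≥ S and all positive integer multiples m of M, there is a digraph homomorphism from a balloon of type (s,m) into G mapping the initial vertex of the balloon to u. -/
noncomputable def cantorDist (σ τ : ℕ → Bool) : ℝ :=
  letI := Classical.propDecidable (∃ n, σ n ≠ τ n)
  if h : ∃ n, σ n ≠ τ n then 1 / (Nat.find h + 1) else 0

def IsPartition (P : Finset (Set (ℕ → Bool))) : Prop :=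
  (∀ a ∈ P, IsClopen a ∧ a.Nonempty) ∧
  (∀ a ∈ P, ∀ b ∈ P, a ≠ b → Disjoint a b) ∧
  ⋃₀ (P : Set (Set (ℕ → Bool))) = Set.univ

noncomputable def cantorDiam (A : Set (ℕ → Bool)) : ℝ :=
  sSup {r | ∃ σ ∈ A, ∃ τ ∈ A, r = cantorDist σ τ}

noncomputable def mesh (C : Set (Set (ℕ → Bool))) : ℝ :=
  sSup (cantorDiam '' C)

def gammaEdge (f : (ℕ → Bool) → (ℕ → Bool)) (a b : Set (ℕ → Bool)) : Prop :=
  (f '' a ∩ b).Nonempty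

def balloonEdge (s m : ℕ) (a b : Fin (s + m)) : Prop :=
  b.val = a.val + 1 ∨ (a.val = s + m - 1 ∧ b.val = s)

def dumbbellEdge (r s t : ℕ) (a b : Fin (r + s + t)) : Prop :=
  (b.val = a.val + 1 ∧ a.val + 1 ≠ r) ∨
  (a.val = r - 1 ∧ b.val = 0) ∨
  (a.val = 0 ∧ b.val = r) ∨
  (a.val = r + s + t - 1 ∧ b.val = r + s)

/-!
Follow the edge `u → v` and then, from `v`, a fixed choice `f` of out-neighbour at every step.
Since `V` is finite, the orbit of `v` under `f` becomes periodic after `a` steps with some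
period `p`, so for `s > a` and `p ∣ m` the walk returns after `s + m` steps to its vertex at time
`s`; closing it up there is exactly a balloon of type `(s, m)`.
-/

namespace Function

theorem Finite.exists_isPeriodicPt_iterate {α : Type*} [Finite α] (f : α → α) (x : α) :
    ∃ a p, 0 < p ∧ IsPeriodicPt f p (f^[a] x) := by
  obtain ⟨a, b, hne, hab⟩ := _root_.Finite.exists_ne_map_eq_of_infinite fun n => f^[n] x
  wlog hlt : a < b generalizing a b
  · exact this b a hne.symm hab.symm (by omega)
  refine ⟨a, b - a, by omega, ?_⟩
  rw [IsPeriodicPt, IsFixedPt, ← iterate_add_apply, Nat.sub_add_cancel hlt.le]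
  exact hab.symm

theorem IsPeriodicPt.iterate_add_eq_of_le {α : Type*} {f : α → α} {x : α} {a p n m : ℕ}
    (h : IsPeriodicPt f p (f^[a] x)) (hn : a ≤ n) (hm : p ∣ m) : f^[n + m] x = f^[n] x := by
  have hper : IsPeriodicPt f m (f^[n] x) := by
    simpa only [← iterate_add_apply, Nat.sub_add_cancel hn] using
      (h.apply_iterate (n - a)).trans_dvd hm
  rw [add_comm, iterate_add_apply]
  exact hper.eq

end Function

section Walk

variable {V : Type*} (E : V → V → Prop)

theorem balloonEdge_map_of_walk (w : ℕ → V) (hw : ∀ n, E (w n) (w (n + 1))) {s m : ℕ}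
    (hret : w (s + m) = w s) (a b : Fin (s + m)) (hab : balloonEdge s m a b) :
    E (w a) (w b) := by
  rcases hab with hsucc | ⟨hlast, hfirst⟩
  · rw [hsucc]
    exact hw a
  · have hclose := hw (s + m - 1)
    rw [Nat.sub_add_cancel (by omega), hret, ← hlast] at hclose
    rwa [hfirst]

def edgeThenIterate (u v : V) (f : V → V) : ℕ → V
  | 0 => u
  | n + 1 => f^[n] v

variable {E}

theorem edgeThenIterate_isWalk {u v : V} {f : V → V} (he : E u v) (hf : ∀ x, E x (f x)) :
    ∀ n, E (edgeThenIterate u v f n) (edgeThenIterate u v f (n + 1))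
  | 0 => he
  | n + 1 => by
    simp only [edgeThenIterate, Function.iterate_succ_apply']
    exact hf _

end Walk

theorem balloon_into_digraph {V : Type*} [Fintype V] (E : V → V → Prop)
    (hE : ∀ x : V, ∃ y : V, E x y) (u v : V) (he : E u v) :
    ∃ S M : ℕ, 0 < S ∧ 0 < M ∧ ∀ s m : ℕ, ∀ _hs : S ≤ s, ∀ hm : 0 < m, ∀ _hM : M ∣ m,
      ∃ φ : Fin (s + m) → V,
        (∀ a b : Fin (s + m), balloonEdge s m a b → E (φ a) (φ b)) ∧
        φ ⟨0, by omega⟩ = u := by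
  choose f hf using hE
  obtain ⟨a, p, hp, hper⟩ := Function.Finite.exists_isPeriodicPt_iterate f v
  refine ⟨a + 1, p, by omega, hp, fun s m hs _ hM => ⟨fun k => edgeThenIterate u v f k, ?_, rfl⟩⟩
  obtain ⟨n, rfl⟩ : ∃ n, s = n + 1 := ⟨s - 1, by omega⟩
  have hret : edgeThenIterate u v f (n + 1 + m) = edgeThenIterate u v f (n + 1) := by
    rw [Nat.add_right_comm]
    exact hper.iterate_add_eq_of_le (by omega) hM
  exact balloonEdge_map_of_walk E _ (edgeThenIterate_isWalk he hf) hret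
end

section
/- Let G be a finite digraph in which every vertex has both an incoming and an outgoing edge. For any edge e = (u,v) of G, there exist positive integers N, S and M such that for all s ≥ S and all positive integer multiples n of N and m of M, there is a digraph homomorphism from a dumbbell of type (n,s,m) into G under which e is the image of some bar edge of the dumbbell. -/
/-!
Following successors from `v` and predecessors from `u` in the finite digraph gives two walks
that are eventually periodic, with periods `M` and `N`. Joined through the edge `u → v`, they form
a single walk that begins by winding `n / N` times around the backward cycle (the first loop),
passes through `u → v` on the bar, and ends winding `m / M` times around the forward cycle (the
second loop).
-/

theorem Function.exists_forall_ge_isPeriodicPt_iterate {α : Type*} [Finite α] (f : α → α)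
    (x : α) : ∃ N > 0, ∃ p, ∀ k ≥ p, Function.IsPeriodicPt f N (f^[k] x) := by
  obtain ⟨a, b, hab, heq⟩ := Set.finite_univ.exists_lt_map_eq_of_forall_mem
    (f := fun k ↦ f^[k] x) fun _ ↦ Set.mem_univ _
  have hper : Function.IsPeriodicPt f (b - a) (f^[a] x) := by
    change f^[b - a] (f^[a] x) = f^[a] x
    rw [← Function.iterate_add_apply, Nat.sub_add_cancel hab.le]
    exact heq.symm
  refine ⟨b - a, Nat.sub_pos_of_lt hab, a, fun k hk ↦ ?_⟩
  simpa only [← Function.iterate_add_apply, Nat.sub_add_cancel hk] using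
    hper.apply_iterate (k - a)

section Walks

variable {V : Type*}

theorem exists_eventually_periodic_walk [Finite V] (E : V → V → Prop)
    (hE : ∀ x, ∃ y, E x y) (v : V) :
    ∃ r : ℕ → V, r 0 = v ∧ (∀ k, E (r k) (r (k + 1))) ∧
      ∃ N > 0, ∃ p, ∀ k ≥ p, ∀ d, N ∣ d → r (k + d) = r k := by
  choose f hf using hE
  obtain ⟨N, hN, p, hp⟩ := Function.exists_forall_ge_isPeriodicPt_iterate f v
  refine ⟨fun k ↦ f^[k] v, rfl, fun k ↦ ?_, N, hN, p, fun k hk d hd ↦ ?_⟩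
  · change E (f^[k] v) (f^[k + 1] v)
    rw [Function.iterate_succ_apply']
    exact hf _
  · change f^[k + d] v = f^[k] v
    rw [add_comm, Function.iterate_add_apply]
    exact ((hp k hk).trans_dvd hd).eq

def joinRays (c : ℕ) (r' r : ℕ → V) (k : ℕ) : V :=
  if k ≤ c then r' (c - k) else r (k - c - 1)

theorem joinRays_of_le {c k : ℕ} (r' r : ℕ → V) (h : k ≤ c) :
    joinRays c r' r k = r' (c - k) :=
  if_pos h

theorem joinRays_of_lt {c k : ℕ} (r' r : ℕ → V) (h : c < k) :
    joinRays c r' r k = r (k - c - 1) :=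
  if_neg h.not_ge

theorem joinRays_step {E : V → V → Prop} {r' r : ℕ → V}
    (hr' : ∀ k, E (r' (k + 1)) (r' k)) (hr : ∀ k, E (r k) (r (k + 1))) (h0 : E (r' 0) (r 0))
    (c k : ℕ) : E (joinRays c r' r k) (joinRays c r' r (k + 1)) := by
  rcases Nat.lt_trichotomy (k + 1) (c + 1) with hk | hk | hk
  · rw [joinRays_of_le _ _ (by omega), joinRays_of_le _ _ (by omega),
      show c - k = c - (k + 1) + 1 by omega]
    exact hr' _
  · rw [joinRays_of_le _ _ (by omega), joinRays_of_lt _ _ (by omega), show c - k = 0 by omega,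
      show k + 1 - c - 1 = 0 by omega]
    exact h0
  · rw [joinRays_of_lt _ _ (by omega), joinRays_of_lt _ _ (by omega),
      show k + 1 - c - 1 = k - c - 1 + 1 by omega]
    exact hr _

theorem exists_dumbbell_hom_of_walk {E : V → V → Prop} {w : ℕ → V}
    (hw : ∀ k, E (w k) (w (k + 1))) {n s m : ℕ} (hn : 0 < n)
    (h₁ : w n = w 0) (h₂ : w (n + s + 1 + m) = w (n + s + 1)) {k : ℕ} (hk : n < k)
    (hks : k < n + s) :
    ∃ φ : Fin (n + s + m) → V,
      (∀ a b, dumbbellEdge n s m a b → E (φ a) (φ b)) ∧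
      ∃ a b : Fin (n + s + m), (n ≤ a.val ∧ a.val + 1 < n + s ∧ b.val = a.val + 1) ∧
        φ a = w k ∧ φ b = w (k + 1) := by
  -- `w n = w 0` provides both the edge closing the first loop and the edge into the bar.
  set φ : Fin (n + s + m) → V := fun x ↦ w (if x.val < n then x.val else x.val + 1)
  refine ⟨φ, ?_, ⟨k - 1, by omega⟩, ⟨k, by omega⟩, by simp only; omega, ?_, ?_⟩
  · intro a b hab
    rcases hab with ⟨hb, hne⟩ | ⟨ha, hb⟩ | ⟨ha, hb⟩ | ⟨ha, hb⟩
    · by_cases han : a.val < n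
      · simpa only [φ, hb, if_pos han, if_pos (show a.val + 1 < n by omega)] using hw a
      · simpa only [φ, hb, if_neg han, if_neg (show ¬a.val + 1 < n by omega)] using hw (a + 1)
    · simpa only [φ, ha, hb, if_pos (show n - 1 < n by omega), if_pos hn, ← h₁,
        show n - 1 + 1 = n by omega] using hw (n - 1)
    · simpa only [φ, ha, hb, if_pos hn, if_neg (lt_irrefl n), ← h₁] using hw n
    · have := b.isLt
      simpa only [φ, ha, hb, if_neg (show ¬n + s + m - 1 < n by omega),
        if_neg (show ¬n + s < n by omega), ← h₂, show n + s + m - 1 + 1 = n + s + m by omega,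
        show n + s + 1 + m = n + s + m + 1 by omega] using hw (n + s + m)
  · simp only [φ, if_neg (show ¬k - 1 < n by omega), show k - 1 + 1 = k by omega]
  · simp only [φ, if_neg (show ¬k < n by omega)]

end Walks

theorem dumbbell_into_digraph {V : Type*} [Fintype V] (E : V → V → Prop)
    (hE : ∀ x : V, (∃ y : V, E x y) ∧ (∃ y : V, E y x)) (u v : V) (he : E u v) :
    ∃ N S M : ℕ, 0 < N ∧ 0 < S ∧ 0 < M ∧
      ∀ n s m : ℕ, ∀ _hs : S ≤ s, ∀ hn : 0 < n, ∀ _hN : N ∣ n, ∀ hm : 0 < m, ∀ _hM : M ∣ m,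
        ∃ φ : Fin (n + s + m) → V,
          (∀ a b : Fin (n + s + m), dumbbellEdge n s m a b → E (φ a) (φ b)) ∧
          ∃ a b : Fin (n + s + m),
            (n ≤ a.val ∧ a.val + 1 < n + s ∧ b.val = a.val + 1) ∧
            φ a = u ∧ φ b = v := by
  obtain ⟨r, hr0, hr, M, hM, p, hper⟩ :=
    exists_eventually_periodic_walk E (fun x ↦ (hE x).1) v
  obtain ⟨r', hr'0, hr', N, hN, p', hper'⟩ :=
    exists_eventually_periodic_walk (fun x y ↦ E y x) (fun x ↦ (hE x).2) u
  refine ⟨N, p + p' + 2, M, hN, by omega, hM, fun n s m hs hn hNn _ hMm ↦ ?_⟩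
  set c := p' + 1
  have hw := joinRays_step (c := n + c) hr' hr (hr'0 ▸ hr0 ▸ he)
  have h₁ : joinRays (n + c) r' r n = joinRays (n + c) r' r 0 := by
    rw [joinRays_of_le _ _ (by omega), joinRays_of_le _ _ (by omega), Nat.sub_zero,
      show n + c - n = c by omega, add_comm n c, hper' c (by omega) n hNn]
  have h₂ : joinRays (n + c) r' r (n + s + 1 + m) = joinRays (n + c) r' r (n + s + 1) := by
    rw [joinRays_of_lt _ _ (by omega), joinRays_of_lt _ _ (by omega),
      show n + s + 1 + m - (n + c) - 1 = s - c + m by omega,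
      show n + s + 1 - (n + c) - 1 = s - c by omega, hper (s - c) (by omega) m hMm]
  obtain ⟨φ, hφ, a, b, hab, hφa, hφb⟩ :=
    exists_dumbbell_hom_of_walk hw hn h₁ h₂ (k := n + c) (by omega) (by omega)
  refine ⟨φ, hφ, a, b, hab, ?_, ?_⟩
  · rw [hφa, joinRays_of_le _ _ le_rfl, Nat.sub_self, hr'0]
  · rw [hφb, joinRays_of_lt _ _ (Nat.lt_succ_self _), show n + c + 1 - (n + c) - 1 = 0 by omega,
      hr0]
end

section
/- Let G be a finite digraph whose vertex set P is a partition of the Cantor space 2^ℕ into nonempty clopen sets, and suppose every vertex of G has an outgoing edge. Let X be the union of all vertices of G that have no incoming edge. Then there exists a homeomorphism f from 2^ℕ onto 2^ℕ \ X such that for all a, b ∈ P, there is an edge a → b in G if and only if f(a) ∩ b ≠ ∅. In particular, if every vertex of G also has an incoming edge, then f is a homeomorphism of 2^ℕ onto itself. -/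
/-!
Split each cell `a` of `P` into nonempty clopen pieces `D(a,b)`, one for every edge `a → b`, and
each cell `b` with an incoming edge into nonempty clopen pieces `R(a,b)`, one for every edge
`a → b`. The pieces `D` partition `2^ℕ`, the pieces `R` partition `2^ℕ \ X`, and every nonempty
clopen subset of `2^ℕ` is homeomorphic to `2^ℕ`: it has the form `S × 2^ℕ` for a finite `S` after
splitting off finitely many coordinates, and `κ × 2^ℕ ≃ₜ 2^ℕ` by induction on `|κ|` from
`2^ℕ ⊕ 2^ℕ ≃ₜ 2^ℕ`. Gluing homeomorphisms `D(a,b) ≃ₜ R(a,b)` gives `f`, which sends a point of `a`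
into `b` exactly when `a → b`. Clopen partitions are handled as locally constant maps, whose
fibres are the pieces.
-/

open Set Topology PiNat

section Fibers

variable {X Y ι : Type*} [TopologicalSpace X] [TopologicalSpace Y]

def Homeomorph.sigmaCongrRight {A B : ι → Type*} [∀ i, TopologicalSpace (A i)]
    [∀ i, TopologicalSpace (B i)] (h : ∀ i, A i ≃ₜ B i) : (Σ i, A i) ≃ₜ Σ i, B i where
  toEquiv := Equiv.sigmaCongrRight fun i => (h i).toEquiv
  continuous_toFun := continuous_sigma_map.2 fun i => (h i).continuous
  continuous_invFun := continuous_sigma_map.2 fun i => (h i).symm.continuous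

def IsLocallyConstant.sigmaFiberHomeomorph {p : X → ι} (hp : IsLocallyConstant p) :
    (Σ i, {x // p x = i}) ≃ₜ X :=
  (Equiv.sigmaFiberEquiv p).toHomeomorphOfContinuousOpen
    (continuous_sigma fun _ => continuous_subtype_val)
    (isOpenMap_sigma.2 fun i => (hp.isOpen_fiber i).isOpenMap_subtype_val)

theorem exists_homeomorph_of_fiberwise {p : X → ι} {q : Y → ι} (hp : IsLocallyConstant p)
    (hq : IsLocallyConstant q) (h : ∀ i, Nonempty ({x // p x = i} ≃ₜ {y // q y = i})) :
    ∃ f : X ≃ₜ Y, ∀ x, q (f x) = p x := by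
  refine ⟨hp.sigmaFiberHomeomorph.symm.trans
    ((Homeomorph.sigmaCongrRight fun i => (h i).some).trans hq.sigmaFiberHomeomorph), fun x => ?_⟩
  exact ((h (p x)).some ⟨x, rfl⟩).2

theorem IsLocallyConstant.isClopen_preimage {f : X → ι} (hf : IsLocallyConstant f) (s : Set ι) :
    IsClopen (f ⁻¹' s) :=
  ⟨by rw [← isOpen_compl_iff, ← preimage_compl]; exact hf sᶜ, hf s⟩

theorem IsLocallyConstant.sigma_elim {A : ι → Type*} [∀ i, TopologicalSpace (A i)] {W : Type*}
    {g : ∀ i, A i → W} (hg : ∀ i, IsLocallyConstant (g i)) :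
    IsLocallyConstant fun x : Σ i, A i => g x.1 x.2 :=
  fun s => isOpen_sigma_iff.2 fun i => hg i s

end Fibers

theorem IsClopen.exists_mem_iff_of_mem_cylinder {E : ℕ → Type*} [∀ n, TopologicalSpace (E n)]
    [∀ n, DiscreteTopology (E n)] [CompactSpace (∀ n, E n)] {U : Set (∀ n, E n)}
    (hU : IsClopen U) : ∃ n, ∀ x, ∀ y ∈ cylinder x n, (y ∈ U ↔ x ∈ U) := by
  let W : ℕ → Set (∀ n, E n) := fun n => {x | ∀ y ∈ cylinder x n, (y ∈ U ↔ x ∈ U)}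
  have hW_mono : Monotone W := fun n m hnm x hx y hy => hx y (cylinder_anti x hnm hy)
  have hW_open : ∀ n, IsOpen (W n) := fun n => isOpen_iff_forall_mem_open.2 fun x hx =>
    ⟨cylinder x n, fun z hz y hy => (hx y (mem_cylinder_iff_eq.1 hz ▸ hy)).trans (hx z hz).symm,
      isOpen_cylinder E x n, self_mem_cylinder x n⟩
  have hW_cover : ∀ x, ∃ n, x ∈ W n := by
    intro x
    by_cases hx : x ∈ U
    · obtain ⟨n, hn⟩ := exists_disjoint_cylinder hU.isOpen.isClosed_compl (not_not_intro hx)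
      exact ⟨n, fun y hy => iff_of_true (not_not.1 (disjoint_right.1 hn hy)) hx⟩
    · obtain ⟨n, hn⟩ := exists_disjoint_cylinder hU.isClosed hx
      exact ⟨n, fun y hy => iff_of_false (disjoint_right.1 hn hy) hx⟩
  obtain ⟨n, hn⟩ := isCompact_univ.elim_directed_cover W hW_open
    (fun x _ => mem_iUnion.2 (hW_cover x)) hW_mono.directed_le
  exact ⟨n, fun x => hn (mem_univ x)⟩

def Homeomorph.natArrowSplit (α : Type*) [TopologicalSpace α] (n : ℕ) :
    (ℕ → α) ≃ₜ (Fin n → α) × (ℕ → α) :=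
  (Homeomorph.piCongrLeft (finSumNatEquiv n)).symm.trans Homeomorph.sumArrowHomeomorphProdArrow

theorem Homeomorph.natArrowSplit_fst (α : Type*) [TopologicalSpace α] (n : ℕ) (x : ℕ → α) :
    (Homeomorph.natArrowSplit α n x).1 = fun i : Fin n => x i := by
  ext i
  simp [Homeomorph.natArrowSplit]

def Homeomorph.cantorSumSelf : (ℕ → Bool) ⊕ (ℕ → Bool) ≃ₜ (ℕ → Bool) :=
  (Homeomorph.sumCongr (Homeomorph.punitProd _).symm (Homeomorph.punitProd _).symm).trans <|
    Homeomorph.sumProdDistrib.symm.trans <|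
    ((Homeomorph.ofDiscrete Equiv.boolEquivPUnitSumPUnit.{0, 0}.symm).prodCongr (.refl _)).trans <|
    ((Homeomorph.funUnique (Fin 1) Bool).symm.prodCongr (.refl _)).trans
      (Homeomorph.natArrowSplit Bool 1).symm

theorem nonempty_fin_prod_cantor_homeomorph (k : ℕ) :
    Nonempty (Fin (k + 1) × (ℕ → Bool) ≃ₜ (ℕ → Bool)) := by
  induction k with
  | zero => exact ⟨Homeomorph.uniqueProd (Fin 1) _⟩
  | succ k ih =>
    exact ⟨((Homeomorph.ofDiscrete finSumFinEquiv.symm).prodCongr (.refl _)).trans <|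
      Homeomorph.sumProdDistrib.trans <|
      (ih.some.sumCongr (Homeomorph.uniqueProd _ _)).trans Homeomorph.cantorSumSelf⟩

theorem nonempty_prod_cantor_homeomorph (κ : Type*) [TopologicalSpace κ] [DiscreteTopology κ]
    [Finite κ] [Nonempty κ] : Nonempty (κ × (ℕ → Bool) ≃ₜ (ℕ → Bool)) := by
  obtain ⟨n, ⟨e⟩⟩ := Finite.exists_equiv_fin κ
  obtain ⟨k, rfl⟩ : ∃ k, n = k + 1 :=
    Nat.exists_eq_succ_of_ne_zero (Fin.pos_iff_nonempty.2 ⟨e (Classical.arbitrary κ)⟩).ne'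
  exact ⟨((Homeomorph.ofDiscrete e).prodCongr (.refl _)).trans
    (nonempty_fin_prod_cantor_homeomorph k).some⟩

theorem IsClopen.nonempty_homeomorph_cantor {U : Set (ℕ → Bool)} (hU : IsClopen U)
    (hne : U.Nonempty) : Nonempty (U ≃ₜ (ℕ → Bool)) := by
  obtain ⟨n, hn⟩ := hU.exists_mem_iff_of_mem_cylinder
  let e := Homeomorph.natArrowSplit Bool n
  let S : Set (Fin n → Bool) := (fun x => (e x).1) '' U
  have hUS : U = e ⁻¹' (S ×ˢ univ) := by
    ext x
    simp only [mem_preimage, mem_prod, mem_univ, and_true, S, mem_image]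
    refine ⟨fun hx => ⟨x, hx, rfl⟩, fun ⟨y, hy, hxy⟩ => (hn y x fun i hi => ?_).2 hy⟩
    simpa [e, Homeomorph.natArrowSplit_fst] using (congrFun hxy ⟨i, hi⟩).symm
  have : Nonempty S := (hne.image _).to_subtype
  exact ⟨(e.sets hUS).trans <| (Homeomorph.Set.prod S univ).trans <|
    ((Homeomorph.refl S).prodCongr (Homeomorph.Set.univ _)).trans
      (nonempty_prod_cantor_homeomorph S).some⟩

section CantorLike

variable {Z : Type*} [TopologicalSpace Z]

theorem IsClopen.nonempty_homeomorph_cantor_of_homeomorph (e : Z ≃ₜ (ℕ → Bool)) {U : Set Z}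
    (hU : IsClopen U) (hne : U.Nonempty) : Nonempty (U ≃ₜ (ℕ → Bool)) := by
  have he : e '' U = e.symm ⁻¹' U := e.image_eq_preimage_symm U
  obtain ⟨f⟩ := (he ▸ hU.preimage e.symm.continuous).nonempty_homeomorph_cantor (hne.image e)
  exact ⟨(e.image U).trans f⟩

theorem exists_isLocallyConstant_surjective (e : Z ≃ₜ (ℕ → Bool)) (κ : Type*) [Finite κ]
    [Nonempty κ] : ∃ s : Z → κ, IsLocallyConstant s ∧ Function.Surjective s := by
  let _ : TopologicalSpace κ := ⊥
  have : DiscreteTopology κ := ⟨rfl⟩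
  obtain ⟨f⟩ := nonempty_prod_cantor_homeomorph κ
  refine ⟨fun z => (f.symm (e z)).1, (IsLocallyConstant.iff_continuous _).2 (by fun_prop),
    fun k => ⟨e.symm (f (k, fun _ => false)), by simp⟩⟩

theorem exists_homeomorph_of_range_eq {Z' ι : Type*} [TopologicalSpace Z'] (e : Z ≃ₜ (ℕ → Bool))
    (e' : Z' ≃ₜ (ℕ → Bool)) {p : Z → ι} {q : Z' → ι} (hp : IsLocallyConstant p)
    (hq : IsLocallyConstant q) (hpq : range p = range q) : ∃ f : Z ≃ₜ Z', ∀ x, q (f x) = p x := by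
  refine exists_homeomorph_of_fiberwise hp hq fun i => ?_
  by_cases hi : i ∈ range p
  · obtain ⟨x, hx⟩ := hi
    obtain ⟨y, hy⟩ : i ∈ range q := hpq ▸ ⟨x, hx⟩
    exact ⟨((hp.isClopen_fiber i).nonempty_homeomorph_cantor_of_homeomorph e ⟨x, hx⟩).some.trans
      ((hq.isClopen_fiber i).nonempty_homeomorph_cantor_of_homeomorph e' ⟨y, hy⟩).some.symm⟩
  · have : IsEmpty {x // p x = i} := ⟨fun x => hi ⟨x.1, x.2⟩⟩
    have : IsEmpty {y // q y = i} := ⟨fun y => hi (hpq ▸ ⟨y.1, y.2⟩)⟩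
    exact ⟨Homeomorph.empty⟩

theorem exists_isLocallyConstant_refinement {V W : Type*} [Finite W] (e : Z ≃ₜ (ℕ → Bool))
    {c : Z → V} (hc : IsLocallyConstant c) (R : V → W → Prop) (hR : ∀ z, ∃ w, R (c z) w) :
    ∃ p : Z → W, IsLocallyConstant p ∧
      range (fun z => (c z, p z)) = {vw | vw.1 ∈ range c ∧ R vw.1 vw.2} := by
  have hsplit : ∀ v, ∃ s : {z // c z = v} → {w // R v w}, IsLocallyConstant s ∧
      (Nonempty {z // c z = v} → Function.Surjective s) := by
    intro v
    by_cases hv : Nonempty {z // c z = v}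
    · obtain ⟨z, hz⟩ := hv
      obtain ⟨w, hw⟩ := hR z
      have : Nonempty {w // R v w} := ⟨⟨w, hz ▸ hw⟩⟩
      obtain ⟨f⟩ := (hc.isClopen_fiber v).nonempty_homeomorph_cantor_of_homeomorph e ⟨z, hz⟩
      obtain ⟨s, hs, hsurj⟩ := exists_isLocallyConstant_surjective f {w // R v w}
      exact ⟨s, hs, fun _ => hsurj⟩
    · exact ⟨fun z => (hv ⟨z⟩).elim, .of_constant _ fun z => (hv ⟨z⟩).elim, fun h => (hv h).elim⟩
  choose s hs hsurj using hsplit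
  have hs_congr : ∀ z v (h : c z = v), (s v ⟨z, h⟩ : W) = s (c z) ⟨z, rfl⟩ := by
    rintro z _ rfl; rfl
  refine ⟨fun z => s (c z) ⟨z, rfl⟩,
    (IsLocallyConstant.sigma_elim fun v => (hs v).comp Subtype.val).comp_continuous
      hc.sigmaFiberHomeomorph.symm.continuous, ?_⟩
  ext ⟨v, w⟩
  constructor
  · rintro ⟨z, hz⟩
    cases hz
    exact ⟨⟨z, rfl⟩, (s (c z) ⟨z, rfl⟩).2⟩
  · rintro ⟨⟨z, rfl⟩, hw⟩
    obtain ⟨⟨z', hz'⟩, hz'w⟩ := hsurj (c z) ⟨⟨z, rfl⟩⟩ ⟨w, hw⟩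
    refine ⟨z', ?_⟩
    simp only [Prod.mk.injEq]
    exact ⟨hz', by rw [← hs_congr z' _ hz', hz'w]⟩

end CantorLike


section Partition

variable {P : Finset (Set (ℕ → Bool))} (hP : IsPartition P)

noncomputable def IsPartition.cell (σ : ℕ → Bool) : {a // a ∈ P} :=
  ⟨_, (sUnion_eq_univ_iff.1 hP.2.2 σ).choose_spec.1⟩

theorem IsPartition.mem_cell (σ : ℕ → Bool) : σ ∈ (hP.cell σ).1 :=
  (sUnion_eq_univ_iff.1 hP.2.2 σ).choose_spec.2

theorem IsPartition.cell_eq_iff {σ : ℕ → Bool} {a : {a // a ∈ P}} :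
    hP.cell σ = a ↔ σ ∈ a.1 := by
  refine ⟨fun h => h ▸ hP.mem_cell σ, fun hσ => Subtype.ext (by_contra fun hne => ?_)⟩
  exact disjoint_left.1 (hP.2.1 _ (hP.cell σ).2 _ a.2 hne) (hP.mem_cell σ) hσ

theorem IsPartition.isLocallyConstant_cell : IsLocallyConstant hP.cell :=
  IsLocallyConstant.iff_isOpen_fiber.2 fun a => by
    simpa only [preimage, mem_singleton_iff, hP.cell_eq_iff, ofPred_mem_eq]
      using (hP.1 a.1 a.2).1.isOpen

theorem IsPartition.cell_surjective : Function.Surjective hP.cell := fun a =>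
  let ⟨σ, hσ⟩ := (hP.1 a.1 a.2).2
  ⟨σ, hP.cell_eq_iff.2 hσ⟩

variable (E : {a // a ∈ P} → {a // a ∈ P} → Prop)

theorem IsPartition.exists_outEdge_refinement (hE : ∀ a, ∃ b, E a b) :
    ∃ p : (ℕ → Bool) → {a // a ∈ P}, IsLocallyConstant p ∧
      range (fun σ => (hP.cell σ, p σ)) = {ab | E ab.1 ab.2} := by
  obtain ⟨p, hp, hrange⟩ := exists_isLocallyConstant_refinement (Homeomorph.refl _)
    hP.isLocallyConstant_cell E fun σ => hE _
  refine ⟨p, hp, hrange.trans ?_⟩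
  simp [hP.cell_surjective.range_eq]

theorem IsPartition.exists_inEdge_refinement {Y : Set (ℕ → Bool)}
    (hY : Y = hP.cell ⁻¹' {b | ∃ a, E a b}) (e : Y ≃ₜ (ℕ → Bool)) :
    ∃ q : Y → {a // a ∈ P}, IsLocallyConstant q ∧
      range (fun y => (q y, hP.cell y)) = {ab | E ab.1 ab.2} := by
  subst hY
  obtain ⟨q, hq, hrange⟩ := exists_isLocallyConstant_refinement e (c := fun y => hP.cell y.1)
    (hP.isLocallyConstant_cell.comp_continuous continuous_subtype_val) (flip E) fun y => y.2
  refine ⟨q, hq, ?_⟩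
  have hswap : range (fun y => (q y, hP.cell y)) =
      Prod.swap ⁻¹' range (fun y => (hP.cell y.1, q y)) := by
    rw [← image_swap_eq_preimage_swap, ← range_comp]; rfl
  rw [hswap, hrange]
  ext ⟨a, b⟩
  refine ⟨fun h => h.2, fun hab => ⟨?_, hab⟩⟩
  obtain ⟨σ, rfl⟩ := hP.cell_surjective b
  exact ⟨⟨σ, a, hab⟩, rfl⟩

variable {E}

theorem IsPartition.rel_iff_image_inter_nonempty {Y : Set (ℕ → Bool)}
    {p : (ℕ → Bool) → {a // a ∈ P}}
    (hp : range (fun σ => (hP.cell σ, p σ)) = {ab | E ab.1 ab.2}) (f : (ℕ → Bool) ≃ₜ Y)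
    (hf : ∀ σ, hP.cell (f σ) = p σ) (a b : {a // a ∈ P}) :
    E a b ↔ ((fun σ => (f σ : ℕ → Bool)) '' a.1 ∩ b.1).Nonempty := by
  constructor
  · intro hab
    obtain ⟨σ, hσ⟩ : (a, b) ∈ range fun σ => (hP.cell σ, p σ) := hp ▸ hab
    obtain ⟨rfl, rfl⟩ := Prod.mk.inj hσ
    exact ⟨f σ, ⟨σ, hP.mem_cell σ, rfl⟩, hf σ ▸ hP.mem_cell _⟩
  · rintro ⟨_, ⟨σ, hσa, rfl⟩, hσb⟩
    have hab : (a, b) ∈ range fun σ => (hP.cell σ, p σ) :=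
      ⟨σ, Prod.ext (hP.cell_eq_iff.2 hσa) ((hf σ).symm.trans (hP.cell_eq_iff.2 hσb))⟩
    rw [hp] at hab
    exact hab

end Partition

theorem graph_realization (P : Finset (Set (ℕ → Bool))) (hP : IsPartition P)
    (E : {a // a ∈ P} → {a // a ∈ P} → Prop)
    (hE : ∀ a, ∃ b, E a b)
    (X : Set (ℕ → Bool))
    (hX : X = ⋃ a : {a // a ∈ P}, ⋃ _ : (∀ b, ¬ E b a), a.val) :
    (∃ f : (ℕ → Bool) ≃ₜ (Set.univ \ X : Set (ℕ → Bool)),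
      ∀ a b : {a // a ∈ P},
        E a b ↔ ((fun σ => ((f σ : (Set.univ \ X : Set (ℕ → Bool))) : ℕ → Bool)) '' a.val ∩ b.val).Nonempty) ∧
    ((∀ a, ∃ b, E b a) → ∃ g : (ℕ → Bool) ≃ₜ (ℕ → Bool),
      ∀ a b : {a // a ∈ P}, E a b ↔ gammaEdge (⇑g) a.val b.val) := by
  have hY : univ \ X = hP.cell ⁻¹' {b | ∃ a, E a b} := by
    ext σ
    simp [hX, ← hP.cell_eq_iff]
  obtain ⟨eY⟩ : Nonempty ((univ \ X : Set (ℕ → Bool)) ≃ₜ (ℕ → Bool)) := by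
    obtain ⟨b, hb⟩ := hE (hP.cell fun _ => false)
    obtain ⟨σ, rfl⟩ := hP.cell_surjective b
    exact hY ▸ (hP.isLocallyConstant_cell.isClopen_preimage _).nonempty_homeomorph_cantor
      ⟨σ, _, hb⟩
  obtain ⟨p, hp, hp_range⟩ := hP.exists_outEdge_refinement E hE
  obtain ⟨q, hq, hq_range⟩ := hP.exists_inEdge_refinement E hY eY
  obtain ⟨f, hf⟩ := exists_homeomorph_of_range_eq (Homeomorph.refl _) eY
    (hP.isLocallyConstant_cell.prodMk hp)
    (hq.prodMk (hP.isLocallyConstant_cell.comp_continuous continuous_subtype_val))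
    (hp_range.trans hq_range.symm)
  have hedge := hP.rel_iff_image_inter_nonempty hp_range f fun σ => congrArg Prod.snd (hf σ)
  refine ⟨⟨f, hedge⟩, fun hin => ?_⟩
  have hX_empty : univ \ X = univ := by
    rw [hY, eq_univ_iff_forall]
    exact fun σ => hin _
  exact ⟨f.trans ((Homeomorph.setCongr hX_empty).trans (Homeomorph.Set.univ _)), hedge⟩
end

section
/- Let f be a continuous self-map of the Cantor space, let Q be a partition of the Cantor space, and let g be a continuous self-map and P a refinement of Q with refinement map ν such that for all a, b ∈ P, g(a) ∩ b ≠ ∅ implies f(ν(a)) ∩ ν(b) ≠ ∅. Then the uniform distance between f and g is at most mesh(Q) + mesh(f(Q)), where f(Q) = {f(a) : a ∈ Q}. -/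
/-! Given σ, choose a ∈ P containing σ and b ∈ P containing g σ. Then g(a) meets b, so f(ν a)
meets ν b: some τ ∈ ν a has f τ ∈ ν b. Now f σ and f τ both lie in f(ν a), while f τ and g σ
both lie in ν b, and the triangle inequality gives the bound. -/

lemma cantorDist_nonneg (σ τ : ℕ → Bool) : 0 ≤ cantorDist σ τ := by
  unfold cantorDist
  split <;> positivity

lemma cantorDist_le_one (σ τ : ℕ → Bool) : cantorDist σ τ ≤ 1 := by
  unfold cantorDist
  split
  · rw [div_le_one (by positivity)]
    linarith [Nat.cast_nonneg (α := ℝ) (Nat.find ‹_›)]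
  · exact zero_le_one

lemma one_div_le_cantorDist {σ τ : ℕ → Bool} {n : ℕ} (h : σ n ≠ τ n) :
    1 / ((n : ℝ) + 1) ≤ cantorDist σ τ := by
  have hex : ∃ m, σ m ≠ τ m := ⟨n, h⟩
  classical
  rw [cantorDist, dif_pos hex]
  gcongr
  exact_mod_cast Nat.find_le h

lemma cantorDist_le_max (σ τ ρ : ℕ → Bool) :
    cantorDist σ ρ ≤ max (cantorDist σ τ) (cantorDist τ ρ) := by
  classical
  unfold cantorDist
  split
  case isTrue h =>
    have hsplit : σ (Nat.find h) ≠ τ (Nat.find h) ∨ τ (Nat.find h) ≠ ρ (Nat.find h) := by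
      by_contra! hc
      exact Nat.find_spec h (hc.1.trans hc.2)
    rcases hsplit with hστ | hτρ
    · exact le_max_of_le_left (one_div_le_cantorDist hστ)
    · exact le_max_of_le_right (one_div_le_cantorDist hτρ)
  case isFalse =>
    exact le_max_of_le_left (cantorDist_nonneg σ τ)

lemma cantorDist_triangle (σ τ ρ : ℕ → Bool) :
    cantorDist σ ρ ≤ cantorDist σ τ + cantorDist τ ρ :=
  (cantorDist_le_max σ τ ρ).trans
    (max_le_add_of_nonneg (cantorDist_nonneg σ τ) (cantorDist_nonneg τ ρ))

lemma cantorDist_le_cantorDiam {A : Set (ℕ → Bool)} {σ τ : ℕ → Bool}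
    (hσ : σ ∈ A) (hτ : τ ∈ A) : cantorDist σ τ ≤ cantorDiam A :=
  le_csSup ⟨1, fun _ ⟨a, _, b, _, hr⟩ => hr ▸ cantorDist_le_one a b⟩ ⟨σ, hσ, τ, hτ, rfl⟩

lemma cantorDiam_le_one (A : Set (ℕ → Bool)) : cantorDiam A ≤ 1 :=
  Real.sSup_le (fun _ ⟨a, _, b, _, hr⟩ => hr ▸ cantorDist_le_one a b) zero_le_one

lemma cantorDiam_le_mesh {C : Set (Set (ℕ → Bool))} {A : Set (ℕ → Bool)}
    (hA : A ∈ C) : cantorDiam A ≤ mesh C :=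
  le_csSup ⟨1, fun _ ⟨a, _, hr⟩ => hr ▸ cantorDiam_le_one a⟩ ⟨A, hA, rfl⟩

lemma cantorDist_le_mesh {C : Set (Set (ℕ → Bool))} {A : Set (ℕ → Bool)} (hA : A ∈ C)
    {σ τ : ℕ → Bool} (hσ : σ ∈ A) (hτ : τ ∈ A) : cantorDist σ τ ≤ mesh C :=
  (cantorDist_le_cantorDiam hσ hτ).trans (cantorDiam_le_mesh hA)

theorem approximation_distance_general
    (f g : (ℕ → Bool) → (ℕ → Bool))
    (Q P : Finset (Set (ℕ → Bool))) (hP : IsPartition P)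
    (ν : {a // a ∈ P} → {a // a ∈ Q})
    (hν : ∀ a : {a // a ∈ P}, a.val ⊆ (ν a).val)
    (hedge : ∀ a b : {a // a ∈ P}, gammaEdge g a.val b.val →
      gammaEdge f (ν a).val (ν b).val) :
    ∀ σ : ℕ → Bool, cantorDist (f σ) (g σ) ≤
      mesh (↑Q : Set (Set (ℕ → Bool))) +
      mesh ((fun A => f '' A) '' (↑Q : Set (Set (ℕ → Bool)))) := by
  intro σ
  have hcover (x : ℕ → Bool) : x ∈ ⋃₀ (P : Set (Set (ℕ → Bool))) := hP.2.2 ▸ Set.mem_univ x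
  obtain ⟨a, haP, hσa⟩ := hcover σ
  obtain ⟨b, hbP, hgσb⟩ := hcover (g σ)
  obtain ⟨_, ⟨τ, hτ, rfl⟩, hfτ⟩ := hedge ⟨a, haP⟩ ⟨b, hbP⟩ ⟨g σ, ⟨σ, hσa, rfl⟩, hgσb⟩
  have hfστ : cantorDist (f σ) (f τ) ≤ mesh ((fun A => f '' A) '' (↑Q : Set (Set (ℕ → Bool)))) :=
    cantorDist_le_mesh (Set.mem_image_of_mem (fun A => f '' A) (ν ⟨a, haP⟩).2)
      (Set.mem_image_of_mem f (hν _ hσa)) (Set.mem_image_of_mem f hτ)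
  have hfτgσ : cantorDist (f τ) (g σ) ≤ mesh (↑Q : Set (Set (ℕ → Bool))) :=
    cantorDist_le_mesh (ν ⟨b, hbP⟩).2 hfτ (hν _ hgσb)
  linarith [cantorDist_triangle (f σ) (f τ) (g σ)]

theorem approximation_distance
    (f g : (ℕ → Bool) → (ℕ → Bool)) (hf : Continuous f) (hg : Continuous g)
    (Q P : Finset (Set (ℕ → Bool))) (hQ : IsPartition Q) (hP : IsPartition P)
    (ν : {a // a ∈ P} → {a // a ∈ Q})
    (hν : ∀ a : {a // a ∈ P}, a.val ⊆ (ν a).val)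
    (hedge : ∀ a b : {a // a ∈ P}, gammaEdge g a.val b.val →
      gammaEdge f (ν a).val (ν b).val) :
    ∀ σ : ℕ → Bool, cantorDist (f σ) (g σ) ≤
      mesh (↑Q : Set (Set (ℕ → Bool))) +
      mesh ((fun A => f '' A) '' (↑Q : Set (Set (ℕ → Bool)))) :=
  approximation_distance_general f g Q P hP ν hν hedge
end

section
/- Let f be a homeomorphism of the Cantor space and ε > 0. There exist positive integers K, N, S and M such that for all k ≥ K, s ≥ S, and all positive integer multiples n of N and m of M, there are a homeomorphism g of the Cantor space and a partition P with mesh(P) < ε and uniform distance between f and g less than ε, such that the digraph Γ(g,P) consists of exactly k disjoint dumbbells of type (n,s,m). -/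
/-!
Pick `L` with `1 / (L + 1) < ε` and, by uniform continuity, `L₀ ≥ L` such that the first `L`
coordinates of `f σ` depend only on the first `L₀` coordinates of `σ`. A word `w` of length `L₀`
then yields a transition from its restriction `p w` to `φ w`, the first `L` coordinates of `f`
on the cylinder of `w`; every word of length `L` has a predecessor and a successor. Walking back
from `p w` and forward from `φ w` along fixed choices of these gives paths which, after
`2 ^ L` steps, are periodic with period dividing `(2 ^ L)!`. So a dumbbell of type `(n, s, m)`
maps homomorphically onto a path through the transition of `w`, and `2 ^ L₀` dumbbells cover
all transitions.

To realize the dumbbells exactly, cut the Cantor space into clopen slots indexed by a word of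
length `L₀` and a dumbbell vertex, label each slot by a vertex admissible for its word (the
partition is by labels), and cut each slot again into pieces indexed by pairs of slots. The
homeomorphism `g` maps the piece of a pair `(x, x')` onto a slot whose label follows the label of
`x` in its dumbbell and is compatible with `f`, namely onto `x'` itself whenever `x'` qualifies.
This choice of target slot is surjective, so `g` exists because `𝒞 ≃ₜ α × 𝒞` for every nonempty
finite `α`.
-/

open Function PiNat Filter

local notation "𝒞" => ℕ → Bool

namespace Cantor

def take (n : ℕ) (σ : 𝒞) : Fin n → Bool := fun i => σ i

@[simp] theorem take_apply (n : ℕ) (σ : 𝒞) (i : Fin n) : take n σ i = σ i := rfl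

theorem take_eq_take_iff {n : ℕ} {σ τ : 𝒞} : take n σ = take n τ ↔ τ ∈ cylinder σ n := by
  simp only [funext_iff, take_apply, Fin.forall_iff, mem_cylinder_iff]
  exact forall₂_congr fun _ _ => eq_comm

@[fun_prop] theorem continuous_take (n : ℕ) : Continuous (take n) :=
  continuous_pi fun i => continuous_apply (i : ℕ)

theorem take_surjective (n : ℕ) : Surjective (take n) :=
  fun w => ⟨fun i => if h : i < n then w ⟨i, h⟩ else false, funext fun i => by simp⟩

theorem factorsThrough_take_of_le {m n : ℕ} (h : m ≤ n) : FactorsThrough (take m) (take n) :=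
  fun _ _ hστ => funext fun i => congrFun hστ (Fin.castLE h i)

theorem eventually_factorsThrough_take {γ : Type*} [TopologicalSpace γ] [DiscreteTopology γ]
    {F : 𝒞 → γ} (hF : Continuous F) : ∀ᶠ n in atTop, FactorsThrough F (take n) := by
  have hloc : ∀ σ, ∃ n, cylinder σ n ⊆ F ⁻¹' {F σ} := fun σ => by
    obtain ⟨_, ⟨x, n, rfl⟩, hσ, hsub⟩ := (isTopologicalBasis_cylinders fun _ => Bool)
      |>.exists_subset_of_mem_open (Set.mem_singleton (F σ)) ((isOpen_discrete _).preimage hF)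
    exact ⟨n, mem_cylinder_iff_eq.1 hσ ▸ hsub⟩
  choose N hN using hloc
  obtain ⟨t, -, ht⟩ := isCompact_univ.elim_nhds_subcover (fun σ => cylinder σ (N σ))
    fun σ _ => (isOpen_cylinder _ σ _).mem_nhds (self_mem_cylinder σ _)
  refine eventually_atTop.2 ⟨t.sup N, fun n hn σ τ hστ => ?_⟩
  obtain ⟨σ₀, hσ₀, hσ⟩ := Set.mem_iUnion₂.1 (ht (Set.mem_univ σ))
  have hτ : τ ∈ cylinder σ₀ (N σ₀) := fun i hi =>
    (take_eq_take_iff.1 hστ i (hi.trans_le ((Finset.le_sup hσ₀).trans hn))).trans (hσ i hi)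
  exact (hN σ₀ hσ).trans (hN σ₀ hτ).symm

def splitAt (n : ℕ) : 𝒞 ≃ₜ (Fin n → Bool) × 𝒞 where
  toFun σ := (take n σ, fun i => σ (n + i))
  invFun x i := if h : i < n then x.1 ⟨i, h⟩ else x.2 (i - n)
  left_inv σ := funext fun i => by
    by_cases h : i < n
    · simp [h]
    · simp [h, Nat.add_sub_cancel' (not_lt.1 h)]
  right_inv x := by ext <;> simp
  continuous_toFun := by fun_prop
  continuous_invFun := continuous_pi fun i => by
    by_cases h : i < n <;> simp only [h, dite_true, dite_false] <;> fun_prop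

theorem nonempty_homeomorph_fin_succ_prod (ν : ℕ) : Nonempty (𝒞 ≃ₜ Fin (ν + 1) × 𝒞) := by
  have split : ∀ μ, Fin (μ + 1) × 𝒞 ≃ₜ (Fin μ × 𝒞) ⊕ 𝒞 := fun μ =>
    ((Homeomorph.ofDiscrete finSumFinEquiv.symm).prodCongr (Homeomorph.refl 𝒞)).trans <|
      Homeomorph.sumProdDistrib.trans <| (Homeomorph.refl _).sumCongr (Homeomorph.uniqueProd _ _)
  have double : 𝒞 ⊕ 𝒞 ≃ₜ 𝒞 :=
    (((Homeomorph.uniqueProd (Fin 1) 𝒞).symm.sumCongr (Homeomorph.refl 𝒞)).trans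
      (split 1).symm).trans
    (((Homeomorph.ofDiscrete (Fintype.equivOfCardEq (by simp))).prodCongr
      (Homeomorph.refl 𝒞)).trans (splitAt 1).symm)
  induction ν with
  | zero => exact ⟨(Homeomorph.uniqueProd (Fin 1) 𝒞).symm⟩
  | succ ν ih =>
    obtain ⟨h⟩ := ih
    exact ⟨double.symm.trans ((h.sumCongr (Homeomorph.refl 𝒞)).trans (split (ν + 1)).symm)⟩

theorem nonempty_homeomorph_prod (α : Type*) [TopologicalSpace α] [DiscreteTopology α] [Finite α]
    [Nonempty α] : Nonempty (𝒞 ≃ₜ α × 𝒞) := by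
  obtain ⟨ν, hν⟩ := Nat.exists_eq_add_one.2 (Nat.card_pos (α := α))
  obtain ⟨h⟩ := nonempty_homeomorph_fin_succ_prod ν
  exact ⟨h.trans ((Homeomorph.ofDiscrete ((Finite.equivFin α).trans (finCongr hν)).symm).prodCongr
    (Homeomorph.refl 𝒞))⟩

/-- Each fibre of `t` is finite and nonempty, so `t ⁻¹' {b} × 𝒞 ≃ₜ 𝒞 ≃ₜ {b} × 𝒞`. -/
theorem exists_homeomorph_prod_fst_eq {α β : Type*} [TopologicalSpace α] [DiscreteTopology α]
    [TopologicalSpace β] [DiscreteTopology β] [Finite α] {t : α → β} (ht : Surjective t) :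
    ∃ G : α × 𝒞 ≃ₜ β × 𝒞, ∀ x, (G x).1 = t x.1 := by
  have h : ∀ b, 𝒞 ≃ₜ {a // t a = b} × 𝒞 := fun b =>
    have : Nonempty {a // t a = b} := let ⟨a, ha⟩ := ht b; ⟨⟨a, ha⟩⟩
    Classical.choice (nonempty_homeomorph_prod _)
  have key : ∀ b (q : {a // t a = b} × 𝒞),
      (t q.1.1, (h (t q.1.1)).symm (⟨q.1.1, rfl⟩, q.2)) = (b, (h b).symm q) := by
    rintro b ⟨⟨a, rfl⟩, c⟩
    rfl
  refine ⟨{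
    toFun := fun x => (t x.1, (h (t x.1)).symm (⟨x.1, rfl⟩, x.2))
    invFun := fun y => ((h y.1 y.2).1.1, (h y.1 y.2).2)
    left_inv := fun x => by simp
    right_inv := fun y => (key y.1 (h y.1 y.2)).trans (by simp)
    continuous_toFun := continuous_prod_of_discrete_left.2 fun a => by
      dsimp only
      exact continuous_const.prodMk <| (h (t a)).symm.continuous.comp <|
        Continuous.prodMk_right (⟨a, rfl⟩ : {a' // t a' = t a})
    continuous_invFun := continuous_prod_of_discrete_left.2 fun b =>
      ((continuous_subtype_val.comp continuous_fst).prodMk continuous_snd).comp (h b).continuous },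
    fun _ => rfl⟩

end Cantor

theorem Function.isPeriodicPt_iterate_of_card_le {α : Type*} [Fintype α] (f : α → α) (x : α)
    {j n : ℕ} (hj : Fintype.card α ≤ j) (hn : (Fintype.card α).factorial ∣ n) :
    IsPeriodicPt f n (f^[j] x) := by
  obtain ⟨a, b, hab, hb, heq⟩ : ∃ a b, a < b ∧ b ≤ Fintype.card α ∧ f^[a] x = f^[b] x := by
    obtain ⟨i, i', hne, heq⟩ := Fintype.exists_ne_map_eq_of_card_lt
      (fun i : Fin (Fintype.card α + 1) => f^[i] x) (by simp)
    rcases Fin.lt_or_lt_of_ne hne with h | h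
    · exact ⟨i, i', h, by omega, heq⟩
    · exact ⟨i', i, h, by omega, heq.symm⟩
  have hper : IsPeriodicPt f (b - a) (f^[a] x) := by
    rw [IsPeriodicPt, IsFixedPt, ← iterate_add_apply, Nat.sub_add_cancel hab.le, heq]
  have hperj := hper.apply_iterate (j - a)
  rw [← iterate_add_apply, Nat.sub_add_cancel (by omega)] at hperj
  exact (isPeriodicPt_factorial_card_of_mem_periodicPts
    (mk_mem_periodicPts (by omega) hperj)).trans_dvd hn

section Dumbbell

variable {k n s m : ℕ}

def dumbbellsAdj (n s m : ℕ) (d d' : Fin k × Fin (n + s + m)) : Prop :=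
  d.1 = d'.1 ∧ dumbbellEdge n s m d.2 d'.2

theorem exists_dumbbellsAdj_right (hn : 0 < n) (hm : 0 < m) (d : Fin k × Fin (n + s + m)) :
    ∃ d', dumbbellsAdj n s m d d' := by
  suffices ∃ b, dumbbellEdge n s m d.2 b from let ⟨b, h⟩ := this; ⟨(d.1, b), rfl, h⟩
  by_cases h₁ : d.2.val = n - 1
  · exact ⟨⟨0, by omega⟩, Or.inr (Or.inl ⟨h₁, rfl⟩)⟩
  by_cases h₂ : d.2.val = n + s + m - 1
  · exact ⟨⟨n + s, by omega⟩, Or.inr (Or.inr (Or.inr ⟨h₂, rfl⟩))⟩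
  exact ⟨⟨d.2 + 1, by omega⟩, Or.inl ⟨rfl, by omega⟩⟩

theorem exists_dumbbellsAdj_left (hn : 0 < n) (d' : Fin k × Fin (n + s + m)) :
    ∃ d, dumbbellsAdj n s m d d' := by
  suffices ∃ a, dumbbellEdge n s m a d'.2 from let ⟨a, h⟩ := this; ⟨(d'.1, a), rfl, h⟩
  by_cases h₁ : d'.2.val = 0
  · exact ⟨⟨n - 1, by omega⟩, Or.inr (Or.inl ⟨rfl, h₁⟩)⟩
  by_cases h₂ : d'.2.val = n
  · exact ⟨⟨0, by omega⟩, Or.inr (Or.inr (Or.inl ⟨rfl, h₂⟩))⟩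
  by_cases h₃ : d'.2.val = n + s
  · exact ⟨⟨n + s + m - 1, by omega⟩, Or.inr (Or.inr (Or.inr ⟨rfl, h₃⟩))⟩
  exact ⟨⟨d'.2 - 1, by omega⟩, Or.inl ⟨by simp; omega, by simp; omega⟩⟩

/-- Vertex `j` of a dumbbell is placed at position `pathIndex n j` of a path. Skipping position
`n` lets the first cycle close up through `γ n = γ 0` while vertex `0` still leads to the bar,
which starts at position `n + 1`. -/
def pathIndex (n j : ℕ) : ℕ := if j < n then j else j + 1

theorem rel_path_of_dumbbellEdge {U : Type*} {T : U → U → Prop} {γ : ℕ → U}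
    (hγ : ∀ i, T (γ i) (γ (i + 1))) (h₁ : γ n = γ 0) (h₂ : γ (n + s + m + 1) = γ (n + s + 1))
    (hn : 0 < n) (hs : 0 < s) {a b : Fin (n + s + m)} (h : dumbbellEdge n s m a b) :
    T (γ (pathIndex n a)) (γ (pathIndex n b)) := by
  have step : ∀ i j, j = i + 1 → T (γ i) (γ j) := by
    rintro i _ rfl
    exact hγ i
  rcases h with ⟨hb, hne⟩ | ⟨ha, hb⟩ | ⟨ha, hb⟩ | ⟨ha, hb⟩ <;> unfold pathIndex
  · split_ifs <;> first | omega | exact step _ _ (by omega)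
  · rw [if_pos (by omega), if_pos (by omega), hb, ← h₁]
    exact step _ _ (by omega)
  · rw [if_pos (by omega), if_neg (by omega), ha, hb, ← h₁]
    exact hγ n
  · rw [if_neg (by omega), if_neg (by omega), ha, hb, ← h₂]
    exact step _ _ (by omega)

end Dumbbell

def biPath {U : Type*} (pred succ : U → U) (N : ℕ) (u u' : U) (i : ℕ) : U :=
  if i ≤ N then pred^[N - i] u else succ^[i - N - 1] u'

theorem biPath_rel {U : Type*} {T : U → U → Prop} {pred succ : U → U}
    (hpred : ∀ v, T (pred v) v) (hsucc : ∀ v, T v (succ v)) {N : ℕ} {u u' : U} (h : T u u')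
    (i : ℕ) : T (biPath pred succ N u u' i) (biPath pred succ N u u' (i + 1)) := by
  unfold biPath
  rcases lt_trichotomy i N with hi | rfl | hi
  · rw [if_pos hi.le, if_pos (show i + 1 ≤ N by omega), show N - i = N - (i + 1) + 1 by omega,
      iterate_succ_apply']
    exact hpred _
  · simpa using h
  · rw [if_neg (by omega), if_neg (by omega), show i + 1 - N - 1 = i - N - 1 + 1 by omega,
      iterate_succ_apply']
    exact hsucc _

theorem exists_dumbbells_hom {U : Type*} [Fintype U] {T : U → U → Prop}
    (hpred : ∀ v, ∃ u, T u v) (hsucc : ∀ u, ∃ v, T u v) {k n s m : ℕ} (c : Fin k → U × U)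
    (hc : ∀ i, T (c i).1 (c i).2) (hn : 0 < n) (hm : 0 < m)
    (hN : (Fintype.card U).factorial ∣ n) (hM : (Fintype.card U).factorial ∣ m)
    (hs : 2 * Fintype.card U < s) :
    ∃ β : Fin k × Fin (n + s + m) → U, (∀ d d', dumbbellsAdj n s m d d' → T (β d) (β d')) ∧
      ∀ i, ∃ j j', dumbbellsAdj n s m (i, j) (i, j') ∧ β (i, j) = (c i).1 ∧
        β (i, j') = (c i).2 := by
  choose pred hpred using hpred
  choose succ hsucc using hsucc
  set Q := Fintype.card U
  -- The pair `c i` sits at positions `n + Q + 1, n + Q + 2` of the `i`-th path, far enough from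
  -- both cycles for the backward and forward walks to be periodic where the cycles close up.
  let γ : Fin k → ℕ → U := fun i => biPath pred succ (n + Q + 1) (c i).1 (c i).2
  refine ⟨fun d => γ d.1 (pathIndex n d.2), ?_, fun i => ?_⟩
  · rintro ⟨i, a⟩ ⟨_, b⟩ ⟨rfl, h⟩
    refine rel_path_of_dumbbellEdge (biPath_rel hpred hsucc (hc i)) ?_ ?_ hn (by omega) h
    · have := Function.isPeriodicPt_iterate_of_card_le pred (c i).1 (j := Q + 1) (by omega) hN
      simp only [biPath, if_pos (show n ≤ n + Q + 1 by omega), if_pos (Nat.zero_le _)]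
      rw [show n + Q + 1 - n = Q + 1 by omega, ← this, ← iterate_add_apply]
      rfl
    · have := Function.isPeriodicPt_iterate_of_card_le succ (c i).2 (j := s - Q - 1) (by omega) hM
      simp only [biPath, if_neg (show ¬ n + s + m + 1 ≤ n + Q + 1 by omega),
        if_neg (show ¬ n + s + 1 ≤ n + Q + 1 by omega)]
      rw [show n + s + m + 1 - (n + Q + 1) - 1 = m + (s - Q - 1) by omega, iterate_add_apply,
        show n + s + 1 - (n + Q + 1) - 1 = s - Q - 1 by omega]
      exact this
  · refine ⟨⟨n + Q, by omega⟩, ⟨n + Q + 1, by omega⟩, ⟨rfl, Or.inl ⟨rfl, by simp; omega⟩⟩, ?_, ?_⟩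
    · simp [γ, pathIndex, biPath]
    · simp [γ, pathIndex, biPath, show ¬ n + Q + 1 < n by omega]

theorem exists_dumbbells_transition_cover {W U : Type*} [Fintype W] [Nonempty W] [Fintype U]
    {p φ : W → U} (hp : Surjective p) (hφ : Surjective φ) {k n s m : ℕ}
    (hk : Fintype.card W ≤ k) (hn : 0 < n) (hm : 0 < m) (hN : (Fintype.card U).factorial ∣ n)
    (hM : (Fintype.card U).factorial ∣ m) (hs : 2 * Fintype.card U < s) :
    ∃ β : Fin k × Fin (n + s + m) → U,
      (∀ d d', dumbbellsAdj n s m d d' → ∃ w, p w = β d ∧ φ w = β d') ∧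
      ∀ w, ∃ d d', dumbbellsAdj n s m d d' ∧ β d = p w ∧ β d' = φ w := by
  obtain ⟨c, hc⟩ : ∃ c : Fin k → W, Surjective c := exists_surjective_iff.2
    ⟨⟨fun _ => Classical.arbitrary W⟩, Function.Embedding.nonempty_of_card_le (by simpa)⟩
  obtain ⟨β, hβ, hcover⟩ := exists_dumbbells_hom (T := fun u u' => ∃ w, p w = u ∧ φ w = u')
    (fun v => let ⟨w, hw⟩ := hφ v; ⟨p w, w, rfl, hw⟩)
    (fun u => let ⟨w, hw⟩ := hp u; ⟨φ w, w, hw, rfl⟩)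
    (fun i => (p (c i), φ (c i))) (fun i => ⟨c i, rfl, rfl⟩) hn hm hN hM hs
  refine ⟨β, hβ, fun w => ?_⟩
  obtain ⟨i, rfl⟩ := hc w
  obtain ⟨j, j', h, h₁, h₂⟩ := hcover i
  exact ⟨_, _, h, h₁, h₂⟩

open Classical in
noncomputable def keepOrChoose {α β : Type*} (r : α → β → Prop) (h : ∀ a, ∃ b, r a b) (a : α)
    (b : β) : β :=
  if r a b then b else (h a).choose

theorem rel_keepOrChoose {α β : Type*} {r : α → β → Prop} (h : ∀ a, ∃ b, r a b) (a : α) (b : β) :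
    r a (keepOrChoose r h a b) := by
  unfold keepOrChoose
  split_ifs with hab
  exacts [hab, (h a).choose_spec]

theorem keepOrChoose_of_rel {α β : Type*} {r : α → β → Prop} (h : ∀ a, ∃ b, r a b) {a : α}
    {b : β} (hab : r a b) : keepOrChoose r h a b = b :=
  if_pos hab

/-- A slot `(w, d)` is a word with a proposed label: `χ` keeps `d` when it is admissible for `w`,
and `t` keeps a proposed successor slot when its label is a legal successor. -/
theorem exists_slot_labelling {W U D : Type*} {p φ : W → U} {E : D → D → Prop} {β : D → U}
    (hβ : ∀ d d', E d d' → ∃ w, p w = β d ∧ φ w = β d')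
    (hcover : ∀ w, ∃ d d', E d d' ∧ β d = p w ∧ β d' = φ w)
    (hout : ∀ d, ∃ d', E d d') (hin : ∀ d', ∃ d, E d d') :
    ∃ (χ : W × D → D) (t : (W × D) × (W × D) → W × D), Surjective t ∧
      (∀ x, β (χ x) = p x.1) ∧ (∀ a, E (χ a.1) (χ (t a)) ∧ β (χ (t a)) = φ a.1.1) ∧
      ∀ d d', E d d' → ∃ a, χ a.1 = d ∧ χ (t a) = d' := by
  let adm : W → D → Prop := fun w d => β d = p w ∧ ∃ d', E d d' ∧ β d' = φ w
  have hadm : ∀ w, ∃ d, adm w d := fun w =>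
    let ⟨d, d', h, h₁, h₂⟩ := hcover w
    ⟨d, h₁, d', h, h₂⟩
  let χ : W × D → D := fun x => keepOrChoose adm hadm x.1 x.2
  have hlift : ∀ d d', E d d' → ∃ w, χ (w, d) = d ∧ φ w = β d' := fun d d' h =>
    let ⟨w, h₁, h₂⟩ := hβ d d' h
    ⟨w, keepOrChoose_of_rel hadm ⟨h₁.symm, d', h, h₂.symm⟩, h₂⟩
  have hχ : Surjective χ := fun d =>
    let ⟨d', h⟩ := hout d
    let ⟨w, hw, _⟩ := hlift d d' h
    ⟨(w, d), hw⟩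
  let next : W × D → W × D → Prop := fun x x' => E (χ x) (χ x') ∧ β (χ x') = φ x.1
  have hnext : ∀ x, ∃ x', next x x' := fun x => by
    obtain ⟨d', h, h'⟩ := (rel_keepOrChoose hadm x.1 x.2).2
    obtain ⟨x', rfl⟩ := hχ d'
    exact ⟨x', h, h'⟩
  let t : (W × D) × (W × D) → W × D := fun a => keepOrChoose next hnext a.1 a.2
  have hrealize : ∀ d d' x', E d d' → χ x' = d' → ∃ a, χ a.1 = d ∧ t a = x' :=
    fun d d' x' h hx' => by
      obtain ⟨w, hw, hφ⟩ := hlift d d' h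
      exact ⟨((w, d), x'), hw,
        keepOrChoose_of_rel hnext ⟨by rw [hw, hx']; exact h, by rw [hx', hφ]⟩⟩
  refine ⟨χ, t, fun x' => ?_, fun x => (rel_keepOrChoose hadm x.1 x.2).1,
    fun a => rel_keepOrChoose hnext a.1 a.2, fun d d' h => ?_⟩
  · obtain ⟨d, h⟩ := hin (χ x')
    obtain ⟨a, -, ha⟩ := hrealize d _ x' h rfl
    exact ⟨a, ha⟩
  · obtain ⟨x', hx'⟩ := hχ d'
    obtain ⟨a, ha, ha'⟩ := hrealize d d' x' h hx'
    exact ⟨a, ha, ha' ▸ hx'⟩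

theorem gammaEdge_preimage_iff {D : Type*} {g : 𝒞 → 𝒞} {ρ : 𝒞 → D} {d d' : D} :
    gammaEdge g (ρ ⁻¹' {d}) (ρ ⁻¹' {d'}) ↔ ∃ σ, ρ σ = d ∧ ρ (g σ) = d' := by
  simp [gammaEdge, Set.Nonempty]

theorem exists_homeomorph_realizing {W U D : Type*} [TopologicalSpace W] [DiscreteTopology W]
    [Finite W] [TopologicalSpace D] [DiscreteTopology D] [Finite D] [Nonempty W]
    {p φ : W → U} {E : D → D → Prop} {β : D → U}
    (hβ : ∀ d d', E d d' → ∃ w, p w = β d ∧ φ w = β d')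
    (hcover : ∀ w, ∃ d d', E d d' ∧ β d = p w ∧ β d' = φ w)
    (hout : ∀ d, ∃ d', E d d') (hin : ∀ d', ∃ d, E d d') (Φ : 𝒞 ≃ₜ W × 𝒞) :
    ∃ (g : 𝒞 ≃ₜ 𝒞) (ρ : 𝒞 → D), Continuous ρ ∧ Surjective ρ ∧
      (∀ σ, β (ρ σ) = p (Φ σ).1) ∧ (∀ σ, β (ρ (g σ)) = φ (Φ σ).1) ∧
      ∀ d d', gammaEdge g (ρ ⁻¹' {d}) (ρ ⁻¹' {d'}) ↔ E d d' := by
  obtain ⟨χ, t, ht, hχβ, hχt, hχE⟩ := exists_slot_labelling hβ hcover hout hin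
  have : Nonempty D := let ⟨d, _⟩ := hcover (Classical.arbitrary W); ⟨d⟩
  obtain ⟨Ψ₀⟩ := Cantor.nonempty_homeomorph_prod D
  let slots : 𝒞 ≃ₜ (W × D) × 𝒞 :=
    (Φ.trans ((Homeomorph.refl W).prodCongr Ψ₀)).trans (Homeomorph.prodAssoc W D 𝒞).symm
  let pairs : 𝒞 ≃ₜ ((W × D) × (W × D)) × 𝒞 :=
    (slots.trans ((Homeomorph.refl _).prodCongr slots)).trans (Homeomorph.prodAssoc _ _ _).symm
  obtain ⟨G, hG⟩ := Cantor.exists_homeomorph_prod_fst_eq ht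
  let g := (pairs.trans G).trans slots.symm
  have hg : ∀ σ, (slots (g σ)).1 = t (pairs σ).1 := fun σ => by simp [g, hG]
  have hedge : ∀ d d', (∃ σ, χ (slots σ).1 = d ∧ χ (slots (g σ)).1 = d') ↔ E d d' := by
    refine fun d d' => ⟨?_, fun h => ?_⟩
    · rintro ⟨σ, rfl, rfl⟩
      rw [hg]
      exact (hχt (pairs σ).1).1
    · obtain ⟨a, rfl, rfl⟩ := hχE d d' h
      obtain ⟨σ, rfl⟩ : ∃ σ, (pairs σ).1 = a := ⟨pairs.symm (a, fun _ => false), by simp⟩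
      exact ⟨σ, rfl, by rw [hg]⟩
  refine ⟨g, fun σ => χ (slots σ).1,
    continuous_of_discreteTopology.comp (continuous_fst.comp slots.continuous), fun d => ?_,
    fun σ => hχβ _, fun σ => (congrArg (fun x => β (χ x)) (hg σ)).trans (hχt (pairs σ).1).2,
    fun d d' => gammaEdge_preimage_iff.trans (hedge d d')⟩
  obtain ⟨d', h⟩ := hout d
  obtain ⟨σ, hσ, -⟩ := (hedge d d').2 h
  exact ⟨σ, hσ⟩

theorem exists_isPartition_fibers {D : Type*} [TopologicalSpace D] [DiscreteTopology D]
    [Fintype D] {ρ : 𝒞 → D} (hρ : Continuous ρ) (hρs : Surjective ρ) :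
    ∃ (P : Finset (Set 𝒞)) (e : {a // a ∈ P} ≃ D), IsPartition P ∧ ∀ a, a.1 = ρ ⁻¹' {e a} := by
  classical
  have hinj : Injective fun d => ρ ⁻¹' {d} := fun d d' h => by
    obtain ⟨σ, rfl⟩ := hρs d
    exact (Set.ext_iff.1 h σ).1 rfl
  let P := Finset.univ.map ⟨_, hinj⟩
  let e : D ≃ {a // a ∈ P} :=
    (Equiv.ofInjective _ hinj).trans (Equiv.subtypeEquivRight fun a => by simp [P])
  refine ⟨P, e.symm, ⟨fun a ha => ?_, fun a ha b hb hab => ?_, ?_⟩, fun a => ?_⟩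
  · obtain ⟨d, -, rfl⟩ := Finset.mem_map.1 ha
    exact ⟨(isClopen_discrete {d}).preimage hρ, hρs d⟩
  · obtain ⟨d, -, rfl⟩ := Finset.mem_map.1 ha
    obtain ⟨d', -, rfl⟩ := Finset.mem_map.1 hb
    exact Disjoint.preimage ρ (Set.disjoint_singleton.2 fun h => hab (congrArg _ h))
  · exact Set.eq_univ_of_forall fun σ => ⟨ρ ⁻¹' {ρ σ}, by simp [P], rfl⟩
  · conv_lhs => rw [← e.apply_symm_apply a]
    rfl

theorem cantorDist_le_of_take_eq {n : ℕ} {σ τ : 𝒞} (h : Cantor.take n σ = Cantor.take n τ) :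
    cantorDist σ τ ≤ 1 / (n + 1) := by
  unfold cantorDist
  split_ifs with hne
  · gcongr
    exact_mod_cast (Nat.le_find_iff hne n).2 fun i hi => not_not.2 (congrFun h ⟨i, hi⟩)
  · positivity

theorem mesh_le_of_take_eq {C : Set (Set 𝒞)} {n : ℕ}
    (h : ∀ a ∈ C, ∀ σ ∈ a, ∀ τ ∈ a, Cantor.take n σ = Cantor.take n τ) :
    mesh C ≤ 1 / (n + 1) :=
  Real.sSup_le (fun _ ⟨a, ha, hr⟩ => hr ▸ Real.sSup_le
    (fun _ ⟨σ, hσ, τ, hτ, hr⟩ => hr ▸ cantorDist_le_of_take_eq (h a ha σ hσ τ hτ))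
    (by positivity)) (by positivity)

theorem exists_take_factors (f : 𝒞 ≃ₜ 𝒞) (L : ℕ) :
    ∃ (L₀ : ℕ) (p φ : (Fin L₀ → Bool) → Fin L → Bool), Surjective p ∧ Surjective φ ∧
      (∀ σ, p (Cantor.take L₀ σ) = Cantor.take L σ) ∧
      ∀ σ, φ (Cantor.take L₀ σ) = Cantor.take L (f σ) := by
  obtain ⟨L₀, hφ, hL⟩ := ((Cantor.eventually_factorsThrough_take
    (F := Cantor.take L ∘ f) (by fun_prop)).and (eventually_ge_atTop L)).exists
  have hp := Cantor.factorsThrough_take_of_le hL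
  refine ⟨L₀, extend (Cantor.take L₀) (Cantor.take L) default,
    extend (Cantor.take L₀) (Cantor.take L ∘ f) default, fun u => ?_, fun u => ?_,
    hp.extend_apply _, hφ.extend_apply _⟩
  · obtain ⟨σ, rfl⟩ := Cantor.take_surjective L u
    exact ⟨_, hp.extend_apply _ σ⟩
  · obtain ⟨σ, rfl⟩ := Cantor.take_surjective L u
    exact ⟨_, (hφ.extend_apply _ (f.symm σ)).trans (by simp)⟩

theorem approx_by_dumbbell_homeo (f : (ℕ → Bool) ≃ₜ (ℕ → Bool)) (ε : ℝ) (hε : 0 < ε) :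
    ∃ K N S M : ℕ, 0 < K ∧ 0 < N ∧ 0 < S ∧ 0 < M ∧
      ∀ k n s m : ℕ, ∀ _hk : K ≤ k, ∀ _hs : S ≤ s,
        ∀ hn : 0 < n, ∀ _hN : N ∣ n, ∀ hm : 0 < m, ∀ _hM : M ∣ m,
        ∃ (g : (ℕ → Bool) ≃ₜ (ℕ → Bool)) (P : Finset (Set (ℕ → Bool))),
          IsPartition P ∧ mesh (↑P : Set (Set (ℕ → Bool))) < ε ∧
          (∀ σ, cantorDist (f σ) (g σ) < ε) ∧
          ∃ e : {a // a ∈ P} ≃ Fin k × Fin (n + s + m),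
            ∀ a b : {a // a ∈ P}, gammaEdge (⇑g) a.val b.val ↔
              ((e a).1 = (e b).1 ∧ dumbbellEdge n s m (e a).2 (e b).2) := by
  obtain ⟨L, hL⟩ := exists_nat_one_div_lt hε
  obtain ⟨L₀, p, φ, hps, hφs, hp, hφ⟩ := exists_take_factors f L
  have hU : Fintype.card (Fin L → Bool) = 2 ^ L := by simp
  refine ⟨2 ^ L₀, (2 ^ L).factorial, 2 * 2 ^ L + 1, (2 ^ L).factorial, by positivity,
    Nat.factorial_pos _, by omega, Nat.factorial_pos _, fun k n s m hk hs hn hN hm hM => ?_⟩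
  obtain ⟨β, hβ, hcover⟩ := exists_dumbbells_transition_cover (s := s) hps hφs (by simpa)
    hn hm (hU ▸ hN) (hU ▸ hM) (by rw [hU]; omega)
  obtain ⟨g, ρ, hρ, hρs, hρβ, hgβ, hedge⟩ := exists_homeomorph_realizing hβ hcover
    (exists_dumbbellsAdj_right hn hm) (exists_dumbbellsAdj_left hn) (Cantor.splitAt L₀)
  obtain ⟨P, e, hP, he⟩ := exists_isPartition_fibers hρ hρs
  have htake : ∀ σ, Cantor.take L σ = β (ρ σ) := fun σ => (hp σ).symm.trans (hρβ σ).symm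
  refine ⟨g, P, hP, (mesh_le_of_take_eq fun a ha σ hσ τ hτ => ?_).trans_lt hL,
    fun σ => (cantorDist_le_of_take_eq ((hφ σ).symm.trans (hgβ σ).symm |>.trans
      (htake (g σ)).symm)).trans_lt hL, e, fun a b => by rw [he a, he b]; exact hedge _ _⟩
  rw [show a = _ from he ⟨a, ha⟩, Set.mem_preimage, Set.mem_singleton_iff] at hσ hτ
  rw [htake, htake, hσ, hτ]
end

section
/- Let f be a continuous self-map of the Cantor space and ε > 0. There exist positive integers K, S and M such that for all k ≥ K, s ≥ S, and all positive integer multiples m of M, there are a continuous self-map g of the Cantor space and a partition P with mesh(P) < ε and uniform distance between f and g less than ε, such that Γ(g,P) consists of exactly k disjoint balloons of type (s,m). -/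
/-!
Choose `N` with `1 / (N + 1) < ε` and, by uniform continuity, `L ≥ N` such that the first `L`
bits of `σ` determine the first `N` bits of `f σ`. Then `f` induces a self-map `ψ` of the finite
set of `L`-bit words, and every `ψ`-orbit is periodic after `2 ^ L` steps with a period dividing
`(2 ^ L)!`. Hence when `s ≥ 2 ^ L` and `(2 ^ L)! ∣ m`, the vertices of a balloon of type `(s, m)`
can be labelled by a `ψ`-orbit so that `ψ` sends each label to the label of the successor
vertex; with `k ≥ 2 ^ L` balloons every word occurs as a label. Split the Cantor space into
clopen cells, one per vertex, each consisting of points whose `L`-prefix is the label of the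
vertex, and let `g` map the cell of a vertex to a single point of the cell of its successor.
Then `Γ(g, P)` is the union of the balloons, the cells have diameter at most `1 / (N + 1)`, and
`g σ` shares its first `N` bits with `f σ`.
-/

open Function Set Filter

section Periodic

variable {α : Type*} [Fintype α] (f : α → α) (x : α)

theorem Function.iterate_mem_periodicPts_of_card_le {c : ℕ} (hc : Fintype.card α ≤ c) :
    f^[c] x ∈ periodicPts f := by
  obtain ⟨a, b, hne, heq⟩ := Fintype.exists_ne_map_eq_of_card_lt
    (fun i : Fin (Fintype.card α + 1) => f^[i] x) (by simp)
  wlog hab : a < b generalizing a b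
  · exact this b a hne.symm heq.symm (lt_of_le_of_ne (not_lt.1 hab) hne.symm)
  have hper : IsPeriodicPt f (b - a) (f^[a] x) := by
    rw [IsPeriodicPt, IsFixedPt, ← iterate_add_apply, Nat.sub_add_cancel hab.le]
    exact heq.symm
  have hc' : f^[c] x = f^[c - a] (f^[a] x) := by
    rw [← iterate_add_apply, Nat.sub_add_cancel (by omega)]
  rw [hc']
  exact mk_mem_periodicPts (by omega) (hper.apply_iterate _)

theorem Function.iterate_add_eq_of_card_le_of_factorial_dvd {c m : ℕ}
    (hc : Fintype.card α ≤ c) (hm : (Fintype.card α).factorial ∣ m) :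
    f^[c + m] x = f^[c] x := by
  rw [add_comm, iterate_add_apply]
  exact (isPeriodicPt_factorial_card_of_mem_periodicPts
    (iterate_mem_periodicPts_of_card_le f x hc)).trans_dvd hm

end Periodic

theorem Fintype.exists_surjective_of_card_le {α β : Type*} [Fintype α] [Fintype β] [Nonempty β]
    (h : Fintype.card β ≤ Fintype.card α) : ∃ u : α → β, Surjective u :=
  let ⟨e⟩ := Function.Embedding.nonempty_of_card_le h
  ⟨invFun e, invFun_surjective e.injective⟩

def balloonSucc {s m : ℕ} (hm : 0 < m) (i : Fin (s + m)) : Fin (s + m) :=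
  if h : i.val + 1 < s + m then ⟨i.val + 1, h⟩ else ⟨s, by omega⟩

theorem balloonEdge_iff_eq_balloonSucc {s m : ℕ} (hm : 0 < m) (i j : Fin (s + m)) :
    balloonEdge s m i j ↔ j = balloonSucc hm i := by
  unfold balloonEdge balloonSucc
  split_ifs <;> simp only [Fin.ext_iff] <;> omega

theorem apply_iterate_eq_iterate_balloonSucc {α : Type*} [Fintype α] (ψ : α → α) (x : α)
    {s m : ℕ} (hs : Fintype.card α ≤ s) (hm : 0 < m) (hM : (Fintype.card α).factorial ∣ m)
    (i : Fin (s + m)) : ψ (ψ^[i] x) = ψ^[balloonSucc hm i] x := by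
  rw [← iterate_succ_apply' ψ]
  unfold balloonSucc
  split_ifs with h
  · rfl
  · rw [show (i : ℕ).succ = s + m by omega]
    exact iterate_add_eq_of_card_le_of_factorial_dvd ψ x hs hM

theorem exists_surjective_balloon_labelling {α : Type*} [Fintype α] [Nonempty α] (ψ : α → α)
    {k s m : ℕ} (hk : Fintype.card α ≤ k) (hs : Fintype.card α ≤ s) (hm : 0 < m)
    (hM : (Fintype.card α).factorial ∣ m) :
    ∃ Z : Fin k × Fin (s + m) → α, Surjective Z ∧ ∀ p, ψ (Z p) = Z (p.1, balloonSucc hm p.2) := by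
  obtain ⟨u, hu⟩ : ∃ u : Fin k → α, Surjective u :=
    Fintype.exists_surjective_of_card_le (by simpa using hk)
  refine ⟨fun p => ψ^[p.2] (u p.1), fun x => ?_, fun p =>
    apply_iterate_eq_iterate_balloonSucc ψ _ hs hm hM p.2⟩
  obtain ⟨j, rfl⟩ := hu x
  exact ⟨(j, ⟨0, by omega⟩), rfl⟩

section CantorPrefix

def cantorPrefix (n : ℕ) (σ : ℕ → Bool) : Fin n → Bool := fun i => σ i

theorem continuous_cantorPrefix (n : ℕ) : Continuous (cantorPrefix n) :=
  continuous_pi fun i => continuous_apply (i : ℕ)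

theorem cantorPrefix_eq_of_le {m n : ℕ} (h : m ≤ n) {σ τ : ℕ → Bool}
    (hστ : cantorPrefix n σ = cantorPrefix n τ) : cantorPrefix m σ = cantorPrefix m τ :=
  funext fun i => congrFun hστ ⟨i, by omega⟩

theorem cantorPrefix_surjective (n : ℕ) : Surjective (cantorPrefix n) :=
  fun w => ⟨fun i => if h : i < n then w ⟨i, h⟩ else false, funext fun i => dif_pos i.2⟩

theorem exists_cantorPrefix_eq_and_shift {L B : ℕ} (u : Fin L → Bool) (t : Fin B → Bool) :
    ∃ σ : ℕ → Bool, cantorPrefix L σ = u ∧ (fun i : Fin B => σ (L + i)) = t := by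
  obtain ⟨σ, hσ⟩ := cantorPrefix_surjective (L + B) (Fin.append u t)
  refine ⟨σ, funext fun i => ?_, funext fun i => ?_⟩
  · simpa [cantorPrefix] using congrFun hσ (Fin.castAdd B i)
  · simpa [cantorPrefix] using congrFun hσ (Fin.natAdd L i)

theorem cantorDist_le_of_cantorPrefix_eq {n : ℕ} {σ τ : ℕ → Bool}
    (h : cantorPrefix n σ = cantorPrefix n τ) : cantorDist σ τ ≤ 1 / (n + 1) := by
  unfold cantorDist
  split_ifs with hex
  · have : n ≤ Nat.find hex := (Nat.le_find_iff _ _).2 fun i hi hne => hne (congrFun h ⟨i, hi⟩)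
    gcongr
  · positivity

theorem cantorDiam_le_of_cantorPrefix_eq {n : ℕ} {A : Set (ℕ → Bool)}
    (h : ∀ σ ∈ A, ∀ τ ∈ A, cantorPrefix n σ = cantorPrefix n τ) : cantorDiam A ≤ 1 / (n + 1) :=
  Real.sSup_le (fun _ ⟨σ, hσ, τ, hτ, hr⟩ => hr ▸ cantorDist_le_of_cantorPrefix_eq (h σ hσ τ hτ))
    (by positivity)

theorem mesh_le_of_cantorPrefix_eq {n : ℕ} {C : Set (Set (ℕ → Bool))}
    (h : ∀ a ∈ C, ∀ σ ∈ a, ∀ τ ∈ a, cantorPrefix n σ = cantorPrefix n τ) :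
    mesh C ≤ 1 / (n + 1) :=
  Real.sSup_le (fun _ ⟨a, ha, hr⟩ => hr ▸ cantorDiam_le_of_cantorPrefix_eq (h a ha))
    (by positivity)

theorem Continuous.eventually_cantorPrefix_determines {f : (ℕ → Bool) → ℕ → Bool}
    (hf : Continuous f) (N : ℕ) :
    ∀ᶠ L in atTop, ∀ σ τ, cantorPrefix L σ = cantorPrefix L τ →
      cantorPrefix N (f σ) = cantorPrefix N (f τ) := by
  let D := {p : (ℕ → Bool) × (ℕ → Bool) | cantorPrefix N (f p.1) ≠ cantorPrefix N (f p.2)}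
  let V (n : ℕ) := {p : (ℕ → Bool) × (ℕ → Bool) | cantorPrefix n p.1 ≠ cantorPrefix n p.2}
  have hD : IsCompact D := (isClosed_discrete {q : _ × _ | q.1 ≠ q.2}).preimage
    (((continuous_cantorPrefix N).comp (hf.comp continuous_fst)).prodMk
      ((continuous_cantorPrefix N).comp (hf.comp continuous_snd))) |>.isCompact
  have hV (n : ℕ) : IsOpen (V n) := (isOpen_discrete {q : _ × _ | q.1 ≠ q.2}).preimage
    (((continuous_cantorPrefix n).comp continuous_fst).prodMk
      ((continuous_cantorPrefix n).comp continuous_snd))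
  have hDV : D ⊆ ⋃ n, V n := by
    intro p hp
    obtain ⟨i, hi⟩ : ∃ i, p.1 i ≠ p.2 i := by
      by_contra! h
      exact hp (by rw [funext h])
    exact mem_iUnion.2 ⟨i + 1, fun h => hi (congrFun h ⟨i, by omega⟩)⟩
  have hVmono : Monotone V := fun m n hmn p hp h => hp (cantorPrefix_eq_of_le hmn h)
  obtain ⟨L, hL⟩ := hD.elim_directed_cover V hV hDV hVmono.directed_le
  filter_upwards [eventually_ge_atTop L] with L' hL' σ τ h
  by_contra hne
  exact hL (show (σ, τ) ∈ D from hne) (cantorPrefix_eq_of_le hL' h)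

end CantorPrefix

theorem exists_isLocallyConstant_surjective_lift {ι : Type*} [Finite ι] {L : ℕ}
    {Z : ι → Fin L → Bool} (hZ : Surjective Z) :
    ∃ c : (ℕ → Bool) → ι, IsLocallyConstant c ∧ Surjective c ∧
      ∀ σ, Z (c σ) = cantorPrefix L σ := by
  classical
  have := Fintype.ofFinite ι
  have := hZ.nonempty
  let B := Fintype.card ι
  obtain ⟨code, hcode⟩ : ∃ code : (Fin B → Bool) → ι, Surjective code :=
    Fintype.exists_surjective_of_card_le (by simpa using Nat.lt_two_pow_self.le)
  -- The bits after the first `L` name a vertex; if its label disagrees with the first `L` bits,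
  -- a fixed vertex carrying that label is used instead.
  let lift (w : (Fin L → Bool) × (Fin B → Bool)) : ι :=
    if Z (code w.2) = w.1 then code w.2 else surjInv hZ w.1
  refine ⟨fun σ => lift (cantorPrefix L σ, fun i => σ (L + i)), ?_, ?_, ?_⟩
  · exact (IsLocallyConstant.of_discrete lift).comp_continuous
      ((continuous_cantorPrefix L).prodMk (continuous_pi fun i => continuous_apply _))
  · intro p
    obtain ⟨t, rfl⟩ := hcode p
    obtain ⟨σ, hσ, hσt⟩ := exists_cantorPrefix_eq_and_shift (Z (code t)) t
    exact ⟨σ, by simp only [lift, hσ, hσt, if_true]⟩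
  · intro σ
    simp only [lift]
    split_ifs with h
    exacts [h, surjInv_eq hZ _]

theorem exists_isPartition_fibers_s8 {ι : Type*} [Finite ι] {c : (ℕ → Bool) → ι}
    (hc : IsLocallyConstant c) (hsurj : Surjective c) :
    ∃ (P : Finset (Set (ℕ → Bool))) (e : {a // a ∈ P} ≃ ι),
      IsPartition P ∧ ∀ a, a.val = c ⁻¹' {e a} := by
  classical
  have := Fintype.ofFinite ι
  let P := Finset.univ.image fun p => c ⁻¹' {p}
  let fiber (p : ι) : {a // a ∈ P} := ⟨c ⁻¹' {p}, Finset.mem_image_of_mem _ (Finset.mem_univ p)⟩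
  have hfiber : Bijective fiber := by
    refine ⟨fun p q h => ?_, fun ⟨a, ha⟩ => ?_⟩
    · exact singleton_injective (hsurj.preimage_injective (congrArg Subtype.val h))
    · obtain ⟨p, -, rfl⟩ := Finset.mem_image.1 ha
      exact ⟨p, rfl⟩
  let e := (Equiv.ofBijective fiber hfiber).symm
  have he (a : {a // a ∈ P}) : a.val = c ⁻¹' {e a} :=
    (congrArg Subtype.val ((Equiv.ofBijective fiber hfiber).apply_symm_apply a)).symm
  refine ⟨P, e, ⟨fun a ha => ?_, fun a ha b hb hab => ?_, ?_⟩, he⟩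
  · obtain ⟨p, -, rfl⟩ := Finset.mem_image.1 ha
    exact ⟨hc.isClopen_fiber p, hsurj p⟩
  · obtain ⟨p, -, rfl⟩ := Finset.mem_image.1 ha
    obtain ⟨q, -, rfl⟩ := Finset.mem_image.1 hb
    exact Disjoint.preimage c (disjoint_singleton.2 fun h => hab (h ▸ rfl))
  · refine eq_univ_of_forall fun σ => ⟨c ⁻¹' {c σ}, ?_, rfl⟩
    exact Finset.mem_coe.2 (Finset.mem_image_of_mem _ (Finset.mem_univ _))

theorem gammaEdge_preimage_singleton_iff {ι : Type*} {c : (ℕ → Bool) → ι} {pt : ι → ℕ → Bool}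
    (hpt : ∀ p, c (pt p) = p) (h : ι → ι) (p q : ι) :
    gammaEdge (pt ∘ h ∘ c) (c ⁻¹' {p}) (c ⁻¹' {q}) ↔ h p = q := by
  constructor
  · rintro ⟨_, ⟨σ, rfl, rfl⟩, hq⟩
    simpa [hpt] using hq
  · rintro rfl
    exact ⟨_, ⟨pt p, hpt p, rfl⟩, by simp [hpt]⟩

theorem IsLocallyConstant.exists_gammaEdge_iff {ι : Type*} [Finite ι] {c : (ℕ → Bool) → ι}
    (hc : IsLocallyConstant c) (hsurj : Surjective c) (h : ι → ι) :
    ∃ (g : (ℕ → Bool) → ℕ → Bool) (P : Finset (Set (ℕ → Bool))) (e : {a // a ∈ P} ≃ ι),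
      Continuous g ∧ IsPartition P ∧ (∀ σ, c (g σ) = h (c σ)) ∧
      (∀ a ∈ P, ∀ σ ∈ a, ∀ τ ∈ a, c σ = c τ) ∧
      ∀ a b, gammaEdge g a.val b.val ↔ h (e a) = e b := by
  obtain ⟨P, e, hP, he⟩ := exists_isPartition_fibers_s8 hc hsurj
  refine ⟨surjInv hsurj ∘ h ∘ c, P, e, (hc.comp (surjInv hsurj ∘ h)).continuous, hP,
    fun σ => surjInv_eq hsurj _, fun a ha σ hσ τ hτ => ?_, fun a b => ?_⟩
  · rw [show a = c ⁻¹' {e ⟨a, ha⟩} from he ⟨a, ha⟩] at hσ hτ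
    exact hσ.trans hτ.symm
  · rw [he a, he b]
    exact gammaEdge_preimage_singleton_iff (surjInv_eq hsurj) h _ _

theorem approx_by_balloon_map (f : (ℕ → Bool) → (ℕ → Bool)) (hf : Continuous f)
    (ε : ℝ) (hε : 0 < ε) :
    ∃ K S M : ℕ, 0 < K ∧ 0 < S ∧ 0 < M ∧
      ∀ k s m : ℕ, ∀ _hk : K ≤ k, ∀ _hs : S ≤ s, ∀ hm : 0 < m, ∀ _hM : M ∣ m,
        ∃ (g : (ℕ → Bool) → (ℕ → Bool)) (P : Finset (Set (ℕ → Bool))),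
          Continuous g ∧ IsPartition P ∧ mesh (↑P : Set (Set (ℕ → Bool))) < ε ∧
          (∀ σ, cantorDist (f σ) (g σ) < ε) ∧
          ∃ e : {a // a ∈ P} ≃ Fin k × Fin (s + m),
            ∀ a b : {a // a ∈ P}, gammaEdge g a.val b.val ↔
              ((e a).1 = (e b).1 ∧ balloonEdge s m (e a).2 (e b).2) := by
  obtain ⟨N, hN⟩ := exists_nat_gt (1 / ε)
  have hNε : 1 / ((N : ℝ) + 1) < ε := (one_div_lt (by positivity) hε).2 (by linarith)
  obtain ⟨L, hL, hNL⟩ :=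
    ((hf.eventually_cantorPrefix_determines N).and (eventually_ge_atTop N)).exists
  let ext := surjInv (cantorPrefix_surjective L)
  let ψ (u : Fin L → Bool) : Fin L → Bool := cantorPrefix L (f (ext u))
  have hcard : Fintype.card (Fin L → Bool) = 2 ^ L := by simp
  refine ⟨2 ^ L, 2 ^ L, (2 ^ L).factorial, by positivity, by positivity, Nat.factorial_pos _,
    fun k s m hk hs hm hM => ?_⟩
  obtain ⟨Z, hZ, hψZ⟩ := exists_surjective_balloon_labelling ψ (hcard ▸ hk) (hcard ▸ hs) hm
    (hcard ▸ hM)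
  obtain ⟨c, hc, hcsurj, hcZ⟩ := exists_isLocallyConstant_surjective_lift hZ
  obtain ⟨g, P, e, hg, hP, hcg, hPc, hgΓ⟩ :=
    hc.exists_gammaEdge_iff hcsurj fun p => (p.1, balloonSucc hm p.2)
  refine ⟨g, P, hg, hP, ?_, fun σ => ?_, e, fun a b => ?_⟩
  · refine (mesh_le_of_cantorPrefix_eq fun a ha σ hσ τ hτ => ?_).trans_lt hNε
    refine cantorPrefix_eq_of_le hNL ?_
    rw [← hcZ, ← hcZ, hPc a ha σ hσ τ hτ]
  · have hgψ : cantorPrefix L (g σ) = ψ (cantorPrefix L σ) := by rw [← hcZ, hcg, ← hψZ, hcZ]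
    refine (cantorDist_le_of_cantorPrefix_eq ?_).trans_lt hNε
    rw [hL σ (ext (cantorPrefix L σ)) (surjInv_eq _ _).symm]
    exact cantorPrefix_eq_of_le hNL hgψ.symm
  · rw [hgΓ, balloonEdge_iff_eq_balloonSucc hm, Prod.ext_iff, eq_comm,
      eq_comm (a := balloonSucc hm _)]
end
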